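/- arXiv:math/0010063 — 6 statements merged into one kernel-verified Lean document; each statement's English description precedes it below -/
import Mathlib

section
/- A probability distribution function F on ℝ satisfying the functional equation F'(y) = (1 - F(-y))(1 - F(y)) for all y must be the logistic distribution function F(y) = (1 + e^{-y})^{-1}. -/
open Filter Set Topology

/-! Since the derivative `(1 - F (-y)) * (1 - F y)` is even, `F y + F (-y)` is constant, and the
limits at `±∞` force the constant to be `1`. Hence `F` solves the logistic equation
`F' = F (1 - F)` with `F 0 = 1 / 2`. The vector field `x ↦ x (1 - x)` is Lipschitz on `[0, 1]`,
where `F` takes its values by monotonicity, so uniqueness of ODE solutions identifies `F` with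
the logistic function. -/

lemma add_comp_neg_eq_of_hasDerivAt_even {F φ : ℝ → ℝ} (hF : ∀ y, HasDerivAt F (φ y) y)
    (hφ : ∀ y, φ (-y) = φ y) (y : ℝ) : F y + F (-y) = F 0 + F 0 := by
  have hsum : ∀ x, HasDerivAt (fun x => F x + F (-x)) 0 x := fun x =>
    ((hF x).add ((hF (-x)).comp x (hasDerivAt_neg x))).congr_deriv (by rw [hφ]; ring)
  simpa using is_const_of_deriv_eq_zero (fun x => (hsum x).differentiableAt)
    (fun x => (hsum x).deriv) y 0

lemma add_comp_neg_eq_one_of_hasDerivAt_even {F φ : ℝ → ℝ} (hbot : Tendsto F atBot (𝓝 0))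
    (htop : Tendsto F atTop (𝓝 1)) (hF : ∀ y, HasDerivAt F (φ y) y) (hφ : ∀ y, φ (-y) = φ y)
    (y : ℝ) : F y + F (-y) = 1 := by
  have hlim : Tendsto (fun t => F t + F (-t)) atTop (𝓝 1) := by
    simpa using htop.add (hbot.comp tendsto_neg_atTop_atBot)
  rw [add_comp_neg_eq_of_hasDerivAt_even hF hφ y]
  exact tendsto_nhds_unique tendsto_const_nhds
    (hlim.congr (add_comp_neg_eq_of_hasDerivAt_even hF hφ))

noncomputable def logistic (y : ℝ) : ℝ := (1 + Real.exp (-y))⁻¹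

lemma logistic_zero : logistic 0 = 1 / 2 := by norm_num [logistic]

lemma logistic_mem_Icc (y : ℝ) : logistic y ∈ Icc 0 1 := by
  have := Real.exp_pos (-y)
  exact ⟨by unfold logistic; positivity, inv_le_one_of_one_le₀ (by linarith)⟩

lemma hasDerivAt_logistic (y : ℝ) : HasDerivAt logistic (logistic y * (1 - logistic y)) y := by
  have hne : 1 + Real.exp (-y) ≠ 0 := by positivity
  refine ((((hasDerivAt_neg y).exp).const_add 1).inv hne).congr_deriv ?_
  unfold logistic
  field_simp
  ring

lemma lipschitzOnWith_mul_one_sub : LipschitzOnWith 1 (fun x : ℝ => x * (1 - x)) (Icc 0 1) := by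
  refine LipschitzOnWith.of_dist_le_mul fun x hx y hy => ?_
  have hfactor : x * (1 - x) - y * (1 - y) = (x - y) * (1 - x - y) := by ring
  have hsmall : |1 - x - y| ≤ 1 := abs_le.2 ⟨by linarith [hx.2, hy.2], by linarith [hx.1, hy.1]⟩
  simp only [Real.dist_eq, hfactor, abs_mul, NNReal.coe_one, one_mul]
  exact mul_le_of_le_one_right (abs_nonneg _) hsmall

lemma eq_logistic_of_hasDerivAt {F : ℝ → ℝ} (hF : ∀ y, HasDerivAt F (F y * (1 - F y)) y)
    (hF01 : ∀ y, F y ∈ Icc 0 1) (h0 : F 0 = 1 / 2) : F = logistic :=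
  ODE_solution_unique_univ (v := fun _ x => x * (1 - x)) (fun _ => lipschitzOnWith_mul_one_sub)
    (fun y => ⟨hF y, hF01 y⟩) (fun y => ⟨hasDerivAt_logistic y, logistic_mem_Icc y⟩)
    (h0.trans logistic_zero.symm)

theorem logistic_characterization (F : ℝ → ℝ)
    (hmono : Monotone F)
    (hbot : Tendsto F atBot (nhds 0))
    (htop : Tendsto F atTop (nhds 1))
    (hderiv : ∀ y : ℝ, HasDerivAt F ((1 - F (-y)) * (1 - F y)) y) :
    ∀ y : ℝ, F y = (1 + Real.exp (-y))⁻¹ := by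
  have hsymm : ∀ y, F y + F (-y) = 1 :=
    add_comp_neg_eq_one_of_hasDerivAt_even hbot htop hderiv fun y => by rw [neg_neg, mul_comm]
  have hode : ∀ y, HasDerivAt F (F y * (1 - F y)) y := fun y => by
    simpa [show 1 - F (-y) = F y by linarith [hsymm y]] using hderiv y
  have h0 : F 0 = 1 / 2 := by linarith [show F 0 + F 0 = 1 by simpa using hsymm 0]
  have hF01 : ∀ y, F y ∈ Icc 0 1 := fun y =>
    ⟨hmono.le_of_tendsto hbot y, hmono.ge_of_tendsto htop y⟩
  exact congrFun (eq_logistic_of_hasDerivAt hode hF01 h0)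
end

section
/- Let X₁ and X₂ be independent random variables with the logistic distribution (density f(x) = (e^{x/2} + e^{-x/2})^{-2}). Then the function h(x) := P(X₁ + X₂ > x), restricted to 0 ≤ x < ∞, is itself a probability density function on [0,∞), i.e., ∫_0^∞ P(X₁ + X₂ > x) dx = 1. -/
open MeasureTheory ProbabilityTheory

/-- The logistic distribution on ℝ, with density `(e^{x/2}+e^{-x/2})⁻²`. -/
noncomputable def logisticMeasure : Measure ℝ :=
  volume.withDensity fun x => ENNReal.ofReal ((Real.exp (x / 2) + Real.exp (-x / 2)) ^ 2)⁻¹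

/-!
Write `F̄(t) = (1 + eᵗ)⁻¹` for the logistic tail, so that the density is `f = -F̄'`.
By independence, `P(X₁ + X₂ > x) = ∫ F̄(x - y) f(y) dy`. Integrating over `x > 0` first (Tonelli)
gives `∫₀^∞ F̄(x - y) dx = log (1 + e^y) = -log F̄(y)`, and the substitution `u = F̄(y)` turns the
remaining integral `∫ -log F̄(y) f(y) dy` into `∫₀¹ -log u du = 1`.
-/

open Real Filter Set Topology

section FTC

variable {g g' : ℝ → ℝ} {a l m n : ℝ}

theorem integrable_deriv_of_nonneg (hderiv : ∀ x, HasDerivAt g (g' x) x) (hg' : ∀ x, 0 ≤ g' x)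
    (hbot : Tendsto g atBot (𝓝 m)) (htop : Tendsto g atTop (𝓝 n)) : Integrable g' := by
  have hint (u v : ℝ) : IntervalIntegrable g' volume u v :=
    intervalIntegral.intervalIntegrable_deriv_of_nonneg
      (fun x _ => (hderiv x).continuousAt.continuousWithinAt) (fun x _ => hderiv x)
      (fun x _ => hg' x)
  have hFTC : (fun i => g i - g (-i)) =ᶠ[atTop] fun i => ∫ x in Ioc (-i) i, g' x := by
    filter_upwards [eventually_ge_atTop 0] with i hi
    rw [← intervalIntegral.integral_of_le (by linarith),
      intervalIntegral.integral_eq_sub_of_hasDerivAt (fun x _ => hderiv x) (hint _ _)]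
  exact (aecover_Ioc tendsto_neg_atTop_atBot tendsto_id).integrable_of_integral_tendsto_of_nonneg_ae
    (n - m) (fun i => (hint (-i) i).1) (ae_of_all _ hg')
    ((htop.sub (hbot.comp tendsto_neg_atTop_atBot)).congr' hFTC)

theorem lintegral_ofReal_deriv_of_nonneg (hderiv : ∀ x, HasDerivAt g (g' x) x)
    (hg' : ∀ x, 0 ≤ g' x) (hbot : Tendsto g atBot (𝓝 m)) (htop : Tendsto g atTop (𝓝 n)) :
    ∫⁻ x, ENNReal.ofReal (g' x) = ENNReal.ofReal (n - m) := by
  have hint := integrable_deriv_of_nonneg hderiv hg' hbot htop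
  rw [← ofReal_integral_eq_lintegral_ofReal hint (ae_of_all _ hg'),
    integral_of_hasDerivAt_of_tendsto hderiv hint hbot htop]

theorem lintegral_Ioi_ofReal_deriv_of_nonneg (hderiv : ∀ x ∈ Ici a, HasDerivAt g (g' x) x)
    (hg' : ∀ x ∈ Ioi a, 0 ≤ g' x) (hg : Tendsto g atTop (𝓝 l)) :
    ∫⁻ x in Ioi a, ENNReal.ofReal (g' x) = ENNReal.ofReal (l - g a) := by
  rw [← ofReal_integral_eq_lintegral_ofReal (integrableOn_Ioi_deriv_of_nonneg' hderiv hg' hg)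
    ((ae_restrict_iff' measurableSet_Ioi).2 (ae_of_all _ hg')),
    integral_Ioi_of_hasDerivAt_of_nonneg' hderiv hg' hg]

end FTC

theorem measure_lt_add_eq_lintegral_map {Ω : Type*} [MeasurableSpace Ω] {P : Measure Ω}
    [IsFiniteMeasure P] {X₁ X₂ : Ω → ℝ} (hm₁ : Measurable X₁) (hm₂ : Measurable X₂)
    (hindep : IndepFun X₁ X₂ P) (x : ℝ) :
    P {ω | x < X₁ ω + X₂ ω} = ∫⁻ y, P.map X₂ (Ioi (x - y)) ∂P.map X₁ := by
  have hs : MeasurableSet {p : ℝ × ℝ | x < p.1 + p.2} :=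
    measurableSet_lt measurable_const (measurable_fst.add measurable_snd)
  have hsection (y : ℝ) : Prod.mk y ⁻¹' {p : ℝ × ℝ | x < p.1 + p.2} = Ioi (x - y) := by
    ext z; simp [sub_lt_iff_lt_add']
  simp_rw [← hsection]
  rw [← Measure.prod_apply hs,
    ← (indepFun_iff_map_prod_eq_prod_map_map hm₁.aemeasurable hm₂.aemeasurable).1 hindep,
    Measure.map_apply (hm₁.prodMk hm₂) hs]
  rfl

noncomputable def logisticDensity (x : ℝ) : ℝ := ((exp (x / 2) + exp (-x / 2)) ^ 2)⁻¹

theorem logisticMeasure_eq_withDensity :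
    logisticMeasure = volume.withDensity fun x => ENNReal.ofReal (logisticDensity x) := rfl

theorem logisticDensity_pos (x : ℝ) : 0 < logisticDensity x := by
  unfold logisticDensity; positivity

theorem logisticDensity_eq_inv_mul (x : ℝ) :
    logisticDensity x = (1 + exp x)⁻¹ * (1 + exp (-x))⁻¹ := by
  have h2 : exp x = exp (x / 2) ^ 2 := by rw [← exp_nat_mul]; ring_nf
  rw [logisticDensity, neg_div, exp_neg, exp_neg, h2]
  field_simp
  ring

theorem hasDerivAt_neg_inv_one_add_exp (x : ℝ) :
    HasDerivAt (fun x => -(1 + exp x)⁻¹) (logisticDensity x) x := by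
  refine (((hasDerivAt_exp x).const_add 1).inv (by positivity)).neg.congr_deriv ?_
  rw [logisticDensity_eq_inv_mul, exp_neg]
  field_simp
  ring

theorem hasDerivAt_log_one_add_exp (x : ℝ) :
    HasDerivAt (fun x => log (1 + exp x)) (1 + exp (-x))⁻¹ x := by
  refine (((hasDerivAt_exp x).const_add 1).log (by positivity)).congr_deriv ?_
  rw [exp_neg]
  field_simp
  ring

theorem tendsto_one_add_exp_atTop : Tendsto (fun x => 1 + exp x) atTop atTop :=
  tendsto_atTop_add_const_left _ 1 tendsto_exp_atTop

instance : SFinite logisticMeasure := by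
  rw [logisticMeasure_eq_withDensity]; infer_instance

theorem logisticMeasure_Ioi (t : ℝ) : logisticMeasure (Ioi t) = ENNReal.ofReal (1 + exp t)⁻¹ := by
  have hlim : Tendsto (fun x => -(1 + exp x)⁻¹) atTop (𝓝 0) := by
    simpa using (tendsto_inv_atTop_zero.comp tendsto_one_add_exp_atTop).neg
  rw [logisticMeasure_eq_withDensity, withDensity_apply _ measurableSet_Ioi,
    lintegral_Ioi_ofReal_deriv_of_nonneg (fun x _ => hasDerivAt_neg_inv_one_add_exp x)
      (fun x _ => (logisticDensity_pos x).le) hlim, zero_sub, neg_neg]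

theorem lintegral_logisticMeasure_Ioi_sub (y : ℝ) :
    ∫⁻ x in Ioi 0, logisticMeasure (Ioi (x - y)) = ENNReal.ofReal (log (1 + exp y)) := by
  have hderiv (x : ℝ) :
      HasDerivAt (fun x => -log (1 + exp (y - x))) (1 + exp (x - y))⁻¹ x := by
    refine ((hasDerivAt_log_one_add_exp (y - x)).comp x
      ((hasDerivAt_id x).const_sub y)).neg.congr_deriv ?_
    simp
  have hlim : Tendsto (fun x => -log (1 + exp (y - x))) atTop (𝓝 0) := by
    have hexp : Tendsto (fun x => 1 + exp (y - x)) atTop (𝓝 1) := by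
      simpa [sub_eq_add_neg] using (tendsto_exp_atBot.comp (tendsto_atBot_add_const_left _ y
        tendsto_neg_atTop_atBot)).const_add 1
    simpa using (hexp.log one_ne_zero).neg
  simp_rw [logisticMeasure_Ioi]
  rw [lintegral_Ioi_ofReal_deriv_of_nonneg (fun x _ => hderiv x) (fun x _ => by positivity) hlim]
  simp

theorem lintegral_log_one_add_exp_logisticMeasure :
    ∫⁻ y, ENNReal.ofReal (log (1 + exp y)) ∂logisticMeasure = 1 := by
  -- `u log u - u`, a primitive of `log u`, under the substitution `u = (1 + e^y)⁻¹`
  set G : ℝ → ℝ := fun y => (1 + log (1 + exp y)) * -(1 + exp y)⁻¹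
  have hderiv (y : ℝ) : HasDerivAt G (logisticDensity y * log (1 + exp y)) y := by
    refine (((hasDerivAt_log_one_add_exp y).const_add 1).mul
      (hasDerivAt_neg_inv_one_add_exp y)).congr_deriv ?_
    rw [logisticDensity_eq_inv_mul]
    ring
  have hbot : Tendsto G atBot (𝓝 (-1)) := by
    have h1 : Tendsto (fun y => 1 + exp y) atBot (𝓝 1) := by
      simpa using tendsto_exp_atBot.const_add 1
    convert (tendsto_const_nhds.add (h1.log one_ne_zero)).mul (h1.inv₀ one_ne_zero).neg using 2
    simp
  have htop : Tendsto G atTop (𝓝 0) := by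
    have h : Tendsto (fun t => (1 + log t) * -t⁻¹) atTop (𝓝 0) := by
      have h0 := (tendsto_inv_atTop_zero.add isLittleO_log_id_atTop.tendsto_div_nhds_zero).neg
      rw [add_zero, neg_zero] at h0
      refine h0.congr' ?_
      filter_upwards [eventually_gt_atTop 0] with t ht
      simp only [id]
      field_simp
    exact h.comp tendsto_one_add_exp_atTop
  have hnonneg (y : ℝ) : 0 ≤ log (1 + exp y) := log_nonneg (by linarith [exp_pos y])
  rw [logisticMeasure_eq_withDensity, lintegral_withDensity_eq_lintegral_mul _
    (by unfold logisticDensity; fun_prop) (by fun_prop)]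
  simp_rw [Pi.mul_apply, ← ENNReal.ofReal_mul (logisticDensity_pos _).le]
  rw [lintegral_ofReal_deriv_of_nonneg hderiv
    (fun y => mul_nonneg (logisticDensity_pos y).le (hnonneg y)) hbot htop]
  norm_num

theorem tail_of_sum_indep_logistic_is_density
    {Ω : Type*} [MeasureSpace Ω] (P : Measure Ω) [IsProbabilityMeasure P]
    (X₁ X₂ : Ω → ℝ) (hm₁ : Measurable X₁) (hm₂ : Measurable X₂)
    (hindep : IndepFun X₁ X₂ P)
    (h₁ : Measure.map X₁ P = logisticMeasure)
    (h₂ : Measure.map X₂ P = logisticMeasure) :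
    ∫ x in Set.Ioi (0 : ℝ), (P {ω | x < X₁ ω + X₂ ω}).toReal = 1 := by
  have hanti : Antitone fun x => P {ω | x < X₁ ω + X₂ ω} :=
    fun _ _ hab => measure_mono fun _ h => lt_of_le_of_lt hab h
  have hlaw (x : ℝ) :
      P {ω | x < X₁ ω + X₂ ω} = ∫⁻ y, logisticMeasure (Ioi (x - y)) ∂logisticMeasure := by
    rw [measure_lt_add_eq_lintegral_map hm₁ hm₂ hindep, h₁, h₂]
  have hmeas : Measurable fun p : ℝ × ℝ => logisticMeasure (Ioi (p.1 - p.2)) :=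
    (Antitone.measurable (f := fun t => logisticMeasure (Ioi t))
      fun _ _ hab => measure_mono (Ioi_subset_Ioi hab)).comp (measurable_fst.sub measurable_snd)
  rw [integral_toReal hanti.measurable.aemeasurable (ae_of_all _ fun _ => measure_lt_top _ _)]
  simp_rw [hlaw]
  rw [lintegral_lintegral_swap hmeas.aemeasurable]
  simp_rw [lintegral_logisticMeasure_Ioi_sub, lintegral_log_one_add_exp_logisticMeasure,
    ENNReal.toReal_one]
end

section
/- For all x > 0, ∫_0^∞ t / ((t+1)²(t + e^x)) dt = x e^x/(e^x - 1)² - 1/(e^x - 1). -/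
/-!
With `a = exp x`, partial fractions give the primitive
`a / (a - 1)² · log ((t + 1) / (t + a)) + 1 / ((a - 1)(t + 1))` of `t / ((t + 1)² (t + a))`.
It vanishes at infinity, and its value at `0` is `-a log a / (a - 1)² + 1 / (a - 1)`.
-/

open MeasureTheory Filter Real Topology Set

noncomputable def integrandPrimitive (a t : ℝ) : ℝ :=
  a / (a - 1) ^ 2 * (log (t + 1) - log (t + a)) + ((a - 1) * (t + 1))⁻¹

theorem hasDerivAt_integrandPrimitive {a t : ℝ} (ha : a ≠ 1) (ht₁ : t + 1 ≠ 0)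
    (htₐ : t + a ≠ 0) :
    HasDerivAt (integrandPrimitive a) (t / ((t + 1) ^ 2 * (t + a))) t := by
  have ha' : a - 1 ≠ 0 := sub_ne_zero.mpr ha
  have hlog₁ : HasDerivAt (fun s ↦ log (s + 1)) (1 / (t + 1)) t :=
    ((hasDerivAt_id t).add_const 1).log ht₁
  have hlogₐ : HasDerivAt (fun s ↦ log (s + a)) (1 / (t + a)) t :=
    ((hasDerivAt_id t).add_const a).log htₐ
  have hinv : HasDerivAt (fun s ↦ ((a - 1) * (s + 1))⁻¹)
      (-((a - 1) * 1) / ((a - 1) * (t + 1)) ^ 2) t :=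
    (((hasDerivAt_id t).add_const 1).const_mul (a - 1)).inv (mul_ne_zero ha' ht₁)
  refine (((hlog₁.sub hlogₐ).const_mul (a / (a - 1) ^ 2)).add hinv).congr_deriv ?_
  field_simp
  ring

theorem tendsto_integrandPrimitive_atTop (a : ℝ) :
    Tendsto (integrandPrimitive a) atTop (𝓝 0) := by
  have hlog : Tendsto (fun t ↦ log (t + 1) - log (t + a)) atTop (𝓝 0) := by
    simpa using (tendsto_log_comp_add_sub_log 1).sub (tendsto_log_comp_add_sub_log a)
  have hinv : Tendsto (fun t ↦ ((a - 1) * (t + 1))⁻¹) atTop (𝓝 0) := by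
    simpa [mul_inv_rev] using
      (tendsto_inv_atTop_zero.comp (tendsto_atTop_add_const_right _ 1 tendsto_id)).mul_const
        (a - 1)⁻¹
  unfold integrandPrimitive
  simpa only [mul_zero, zero_add] using (hlog.const_mul (a / (a - 1) ^ 2)).add hinv

theorem integral_Ioi_div_sq_mul_add {a : ℝ} (ha₀ : 0 < a) (ha : a ≠ 1) :
    ∫ t in Ioi (0 : ℝ), t / ((t + 1) ^ 2 * (t + a)) =
      a * log a / (a - 1) ^ 2 - 1 / (a - 1) := by
  have ha' : a - 1 ≠ 0 := sub_ne_zero.mpr ha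
  rw [integral_Ioi_of_hasDerivAt_of_nonneg'
    (fun t (ht : 0 ≤ t) ↦ hasDerivAt_integrandPrimitive ha (by positivity) (by positivity))
    (fun t (ht : 0 < t) ↦ by positivity) (tendsto_integrandPrimitive_atTop a)]
  simp only [integrandPrimitive, zero_add, log_one]
  field_simp
  ring

theorem integral_formula (x : ℝ) (hx : 0 < x) :
    ∫ t in Set.Ioi (0 : ℝ), t / ((t + 1) ^ 2 * (t + Real.exp x)) =
      x * Real.exp x / (Real.exp x - 1) ^ 2 - 1 / (Real.exp x - 1) := by
  rw [integral_Ioi_div_sq_mul_add (exp_pos x) (one_lt_exp_iff.mpr hx).ne', log_exp, mul_comm]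
end

section
/- For two real numbers u, v with the logistic distribution function F(x) = (1+e^{-x})^{-1}: the distribution of min(X₁,X₂)+η, where X₁,X₂ are i.i.d. logistic and η is independent exponential(1), has distribution function G satisfying G(x) = F(x) for all x; equivalently, for all real x, P(min(X₁,X₂) + η ≤ x) = (1 + e^{-x})^{-1}. -/
/-!
Write `F` for the logistic distribution function. The logistic survival function is `1 - F`, so
by independence `min(X₁, X₂)` has distribution function `G = 1 - (1 - F)²`, and
`P(min(X₁, X₂) + η ≤ x) = ∫_0^∞ e^{-t} G(x - t) dt`. Because `F' = F (1 - F)`, one has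
`G = F + F'`, i.e. `e^{-t} G(x - t)` is the `t`-derivative of `-e^{-t} F(x - t)`, and the
integral telescopes to `F(x)`.
-/

open MeasureTheory ProbabilityTheory

open Real Filter Topology Set
open scoped ENNReal

noncomputable def logisticCDF (x : ℝ) : ℝ := (1 + exp (-x))⁻¹

lemma logisticCDF_nonneg (x : ℝ) : 0 ≤ logisticCDF x := by
  unfold logisticCDF; positivity

lemma logisticCDF_le_one (x : ℝ) : logisticCDF x ≤ 1 :=
  inv_le_one_of_one_le₀ (le_add_of_nonneg_right (exp_pos _).le)

lemma one_sub_logisticCDF (x : ℝ) : 1 - logisticCDF x = (1 + exp x)⁻¹ := by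
  rw [logisticCDF, exp_neg]
  field_simp
  ring

lemma hasDerivAt_logisticCDF (x : ℝ) :
    HasDerivAt logisticCDF (logisticCDF x * (1 - logisticCDF x)) x := by
  have h : HasDerivAt (fun z => 1 + exp (-z)) (-exp (-x)) x := by
    simpa using ((hasDerivAt_id x).neg.exp).const_add 1
  refine (h.inv (by positivity)).congr_deriv ?_
  rw [one_sub_logisticCDF, logisticCDF, exp_neg]
  field_simp
  ring

lemma tendsto_logisticCDF_atTop : Tendsto logisticCDF atTop (𝓝 1) := by
  have h := (tendsto_exp_neg_atTop_nhds_zero.const_add 1).inv₀ (by norm_num : (1 : ℝ) + 0 ≠ 0)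
  rwa [add_zero, inv_one] at h

lemma logisticDensity_eq (x : ℝ) :
    ((exp (x / 2) + exp (-x / 2)) ^ 2)⁻¹ = logisticCDF x * (1 - logisticCDF x) := by
  have hsq : (exp (x / 2) + exp (-x / 2)) ^ 2 = exp x + 2 + exp (-x) := by
    rw [add_sq, ← exp_nat_mul, ← exp_nat_mul, mul_assoc, ← exp_add]
    ring_nf
    rw [exp_zero]
    ring
  rw [hsq, one_sub_logisticCDF, logisticCDF, exp_neg]
  field_simp
  ring

lemma lintegral_Ioi_ofReal_of_hasDerivAt_of_nonneg {f f' : ℝ → ℝ} {a l : ℝ}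
    (hderiv : ∀ x ∈ Ici a, HasDerivAt f (f' x) x) (hf' : ∀ x ∈ Ioi a, 0 ≤ f' x)
    (hf : Tendsto f atTop (𝓝 l)) :
    ∫⁻ x in Ioi a, ENNReal.ofReal (f' x) = ENNReal.ofReal (l - f a) := by
  rw [← ofReal_integral_eq_lintegral_ofReal (integrableOn_Ioi_deriv_of_nonneg' hderiv hf' hf)
    (ae_restrict_of_forall_mem measurableSet_Ioi hf'),
    integral_Ioi_of_hasDerivAt_of_nonneg' hderiv hf' hf]

lemma logisticMeasure_Ioi_s12 (y : ℝ) :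
    logisticMeasure (Ioi y) = ENNReal.ofReal (1 - logisticCDF y) := by
  rw [logisticMeasure, withDensity_apply _ measurableSet_Ioi]
  simp_rw [logisticDensity_eq]
  exact lintegral_Ioi_ofReal_of_hasDerivAt_of_nonneg (fun x _ => hasDerivAt_logisticCDF x)
    (fun x _ => mul_nonneg (logisticCDF_nonneg x) (sub_nonneg.2 (logisticCDF_le_one x)))
    tendsto_logisticCDF_atTop

lemma lintegral_exponentialPDF_mul (r : ℝ) (g : ℝ → ℝ≥0∞) :
    ∫⁻ t, exponentialPDF r t * g t = ∫⁻ t in Ioi 0, ENNReal.ofReal (r * exp (-(r * t))) * g t := by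
  rw [setLIntegral_congr Ioi_ae_eq_Ici, ← lintegral_indicator measurableSet_Ici]
  refine lintegral_congr fun t => ?_
  by_cases ht : 0 ≤ t
  · rw [indicator_of_mem (mem_Ici.2 ht), exponentialPDF_of_nonneg ht]
  · rw [indicator_of_notMem (fun h => ht (mem_Ici.1 h)), exponentialPDF_of_neg (not_le.1 ht),
      zero_mul]

lemma lintegral_Ioi_exp_neg_mul_cdf_min_logistic (x : ℝ) :
    ∫⁻ t in Ioi 0, ENNReal.ofReal (exp (-t)) * ENNReal.ofReal (1 - (1 - logisticCDF (x - t)) ^ 2)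
      = ENNReal.ofReal (logisticCDF x) := by
  have hderiv : ∀ t ∈ Ici (0 : ℝ), HasDerivAt (fun t => -(exp (-t) * logisticCDF (x - t)))
      (exp (-t) * (1 - (1 - logisticCDF (x - t)) ^ 2)) t := fun t _ => by
    have he : HasDerivAt (fun t => exp (-t)) (-exp (-t)) t := by
      simpa using (hasDerivAt_id t).neg.exp
    have hF := (hasDerivAt_logisticCDF (x - t)).comp t ((hasDerivAt_id t).const_sub x)
    exact (he.mul hF).neg.congr_deriv (by simp only [Function.comp_apply]; ring)
  have hnonneg : ∀ t ∈ Ioi (0 : ℝ), 0 ≤ exp (-t) * (1 - (1 - logisticCDF (x - t)) ^ 2) :=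
    fun t _ => by
      have h0 := logisticCDF_nonneg (x - t)
      have h1 := logisticCDF_le_one (x - t)
      have : 0 ≤ 1 - (1 - logisticCDF (x - t)) ^ 2 := by nlinarith
      positivity
  have htendsto : Tendsto (fun t => -(exp (-t) * logisticCDF (x - t))) atTop (𝓝 0) := by
    have h := squeeze_zero (fun t => mul_nonneg (exp_pos (-t)).le (logisticCDF_nonneg (x - t)))
      (fun t => mul_le_of_le_one_right (exp_pos (-t)).le (logisticCDF_le_one (x - t)))
      tendsto_exp_neg_atTop_nhds_zero
    simpa using h.neg
  simp_rw [← ENNReal.ofReal_mul (exp_pos _).le]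
  rw [lintegral_Ioi_ofReal_of_hasDerivAt_of_nonneg hderiv hnonneg htendsto]
  simp

section Independence

variable {Ω : Type*} [MeasurableSpace Ω] {P : Measure Ω}

lemma measure_min_le_eq_one_sub_mul [IsProbabilityMeasure P] {β : Type*} [LinearOrder β]
    [TopologicalSpace β] [OrderClosedTopology β] [MeasurableSpace β] [OpensMeasurableSpace β] {X Y : Ω → β}
    (hX : Measurable X) (hY : Measurable Y) (h : IndepFun X Y P) (y : β) :
    P {ω | min (X ω) (Y ω) ≤ y} = 1 - P {ω | y < X ω} * P {ω | y < Y ω} := by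
  have hcompl : {ω | min (X ω) (Y ω) ≤ y} = (X ⁻¹' Ioi y ∩ Y ⁻¹' Ioi y)ᶜ := by
    ext ω
    simp only [mem_compl_iff, mem_inter_iff, mem_preimage, mem_Ioi, not_and_or, not_lt]
    exact min_le_iff
  rw [hcompl, prob_compl_eq_one_sub ((hX measurableSet_Ioi).inter (hY measurableSet_Ioi)),
    h.measure_inter_preimage_eq_mul _ _ measurableSet_Ioi measurableSet_Ioi]
  rfl

lemma measure_add_le_eq_lintegral_of_indepFun [IsFiniteMeasure P] {M η : Ω → ℝ} (hM : Measurable M)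
    (hη : Measurable η) (h : IndepFun M η P) {f : ℝ → ℝ≥0∞} (hf : Measurable f)
    (hlaw : P.map η = volume.withDensity f) (x : ℝ) :
    P {ω | M ω + η ω ≤ x} = ∫⁻ t, f t * P {ω | M ω ≤ x - t} := by
  have hs : MeasurableSet {p : ℝ × ℝ | p.1 + p.2 ≤ x} :=
    measurableSet_le (measurable_fst.add measurable_snd) measurable_const
  have hslice : ∀ t, P.map M ((fun m => (m, t)) ⁻¹' {p : ℝ × ℝ | p.1 + p.2 ≤ x})
      = P {ω | M ω ≤ x - t} := fun t => by
    rw [Measure.map_apply hM (hs.preimage measurable_prodMk_right)]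
    simp only [le_sub_iff_add_le]
    rfl
  have hanti : Antitone fun t => P {ω | M ω ≤ x - t} := fun t t' htt' =>
    measure_mono fun ω (hω : M ω ≤ x - t') => show M ω ≤ x - t by linarith
  calc P {ω | M ω + η ω ≤ x}
      = P.map (fun ω => (M ω, η ω)) {p : ℝ × ℝ | p.1 + p.2 ≤ x} :=
        (Measure.map_apply (hM.prodMk hη) hs).symm
    _ = ((P.map M).prod (volume.withDensity f)) {p : ℝ × ℝ | p.1 + p.2 ≤ x} := by
        rw [(indepFun_iff_map_prod_eq_prod_map_map hM.aemeasurable hη.aemeasurable).1 h, hlaw]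
    _ = ∫⁻ t, P {ω | M ω ≤ x - t} ∂(volume.withDensity f) := by
        simp_rw [Measure.prod_apply_symm hs, hslice]
    _ = ∫⁻ t, f t * P {ω | M ω ≤ x - t} :=
        lintegral_withDensity_eq_lintegral_mul _ hf hanti.measurable

lemma measure_min_le_of_logistic [IsProbabilityMeasure P] {X₁ X₂ : Ω → ℝ} (hm₁ : Measurable X₁)
    (hm₂ : Measurable X₂) (h : IndepFun X₁ X₂ P) (hX₁ : P.map X₁ = logisticMeasure) (hX₂ : P.map X₂ = logisticMeasure)
    (y : ℝ) :
    P {ω | min (X₁ ω) (X₂ ω) ≤ y} = ENNReal.ofReal (1 - (1 - logisticCDF y) ^ 2) := by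
  have hsurv : ∀ {X : Ω → ℝ}, Measurable X → P.map X = logisticMeasure →
      P {ω | y < X ω} = ENNReal.ofReal (1 - logisticCDF y) := fun hX hlaw => by
    rw [← logisticMeasure_Ioi_s12, ← hlaw, Measure.map_apply hX measurableSet_Ioi]
    rfl
  rw [measure_min_le_eq_one_sub_mul hm₁ hm₂ h, hsurv hm₁ hX₁, hsurv hm₂ hX₂,
    ← ENNReal.ofReal_mul (sub_nonneg.2 (logisticCDF_le_one y)),
    ENNReal.ofReal_sub _ (by positivity), ENNReal.ofReal_one, sq]

end Independence

theorem min_logistic_plus_exponential_cdf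
    {Ω : Type*} [MeasureSpace Ω] (P : Measure Ω) [IsProbabilityMeasure P]
    (X₁ X₂ η : Ω → ℝ)
    (hm₁ : Measurable X₁) (hm₂ : Measurable X₂) (hmη : Measurable η)
    (hindep : iIndepFun ![X₁, X₂, η] P)
    (hX₁ : Measure.map X₁ P = logisticMeasure)
    (hX₂ : Measure.map X₂ P = logisticMeasure)
    (hη : Measure.map η P = expMeasure 1) :
    ∀ x : ℝ, (P {ω | min (X₁ ω) (X₂ ω) + η ω ≤ x}).toReal = (1 + Real.exp (-x))⁻¹ := by
  intro x
  have hmeas : ∀ i, Measurable (![X₁, X₂, η] i) := by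
    intro i
    fin_cases i <;> assumption
  have h₁₂ : IndepFun X₁ X₂ P := by
    simpa using hindep.indepFun (show (0 : Fin 3) ≠ 1 by decide)
  have hminη : IndepFun (fun ω => min (X₁ ω) (X₂ ω)) η P :=
    (hindep.indepFun_prodMk hmeas 0 1 2 (by decide) (by decide)).comp
      (measurable_fst.min measurable_snd) measurable_id
  rw [measure_add_le_eq_lintegral_of_indepFun (hm₁.min hm₂) hmη hminη (f := exponentialPDF 1)
      (measurable_exponentialPDFReal 1).ennreal_ofReal hη, lintegral_exponentialPDF_mul]
  simp_rw [one_mul, measure_min_le_of_logistic hm₁ hm₂ h₁₂ hX₁ hX₂]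
  rw [lintegral_Ioi_exp_neg_mul_cdf_min_logistic, ENNReal.toReal_ofReal (logisticCDF_nonneg x)]
  rfl
end

section
/- Define a matching relation on the vertex set of the infinite tree T by v* = argmin_{v' ~ v} (W(v,v') - X(v,v')), where the X(→e) satisfy the recursion X(→e) = min_j (W(→e_j) - X(→e_j)) over the children →e_j of →e, and all argmins are assumed uniquely attained. Then (v*)* = v for every vertex v, so the set of edges {(v, v*) : v ∈ V} is a matching (each vertex is incident to exactly one matched edge). -/
/-- Tree-matching construction: on a graph (the infinite tree) with symmetric
adjacency `Adj`, symmetric edge-weights `W`, and directed-edge values `X`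
satisfying the recursion `X (v',v) = min_{y ~ v, y ≠ v'} (W v y - X v y)` with
all minima uniquely (strictly) attained, define `star v` as the neighbor
uniquely attaining `min_{y ~ v} (W v y - X v y)`.  Then `star (star v) = v`
for every vertex, so `{(v, star v)}` is a matching. -/
theorem tree_matching_involutive {V : Type*}
    (Adj : V → V → Prop) (W : V → V → ℝ) (X : V → V → ℝ) (star : V → V)
    (hAdjSymm : ∀ u v, Adj u v → Adj v u)
    (hWSymm : ∀ u v, W u v = W v u)
    -- the recursion: `X v' v` is the minimum of `W v y - X v y` over neighbors
    -- `y` of `v` other than `v'`, attained uniquely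
    (hXle : ∀ v' v, Adj v' v → ∀ y, Adj v y → y ≠ v' →
      X v' v ≤ W v y - X v y)
    (hXatt : ∀ v' v, Adj v' v → ∃ y, Adj v y ∧ y ≠ v' ∧
      X v' v = W v y - X v y ∧
      ∀ z, Adj v z → z ≠ v' → z ≠ y → X v' v < W v z - X v z)
    -- `star v` uniquely attains the minimum of `W v y - X v y` over all
    -- neighbors `y` of `v`
    (hstarAdj : ∀ v, Adj v (star v))
    (hstarMin : ∀ v y, Adj v y → y ≠ star v →
      W v (star v) - X v (star v) < W v y - X v y) :
    ∀ v, star (star v) = v := by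
  intro v
  by_contra h
  set s := star v with hs
  set t := star s with ht
  have hvs : Adj v s := hstarAdj v
  have hsv : Adj s v := hAdjSymm _ _ hvs
  have hst : Adj s t := hstarAdj s
  -- t ≠ v
  have htv : t ≠ v := fun he => h he
  -- attainment for X s v : there is y₀ ≠ s with X s v = W v y₀ - X v y₀
  obtain ⟨y₀, hy₀adj, hy₀s, hy₀eq, -⟩ := hXatt s v hsv
  -- since star v = s and y₀ ≠ s: W v s - X v s < W v y₀ - X v y₀ = X s v
  have h1 : W v s - X v s < X s v := by
    have := hstarMin v y₀ hy₀adj (by simpa [hs] using hy₀s)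
    rw [← hs] at this
    linarith [hy₀eq ▸ this]
  -- star s = t ≠ v, so W s t - X s t < W s v - X s v
  have h2 : W s t - X s t < W s v - X s v := by
    have := hstarMin s v hsv (Ne.symm htv)
    rw [← ht] at this
    exact this
  -- X v s ≤ W s t - X s t
  have h3 : X v s ≤ W s t - X s t := hXle v s hvs t hst htv
  have hW : W v s = W s v := hWSymm v s
  linarith
end

section
/- In the setting of the tree matching recursion, an edge e = (v, v') is in the matching M_opt (i.e., v* = v' and (v')* = v) if and only if W(e) < X(→e) + X(←e), where →e = (v', v) and ←e = (v, v') are the two orientations of e. -/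
/-- Criterion for membership in the optimal tree matching: in the setting of the
tree-matching recursion (`X (v',v) = min_{y ~ v, y ≠ v'} (W v y - X v y)`, minima
uniquely attained, and `star v` the neighbor of `v` uniquely attaining
`min_{y ~ v}(W v y - X v y)`), an edge `(u,v)` is in the matching
(`star u = v` and `star v = u`) iff `W u v < X u v + X v u`. -/
theorem tree_matching_edge_criterion {V : Type*}
    (Adj : V → V → Prop) (W : V → V → ℝ) (X : V → V → ℝ) (star : V → V)
    (hAdjSymm : ∀ u v, Adj u v → Adj v u)
    (hWSymm : ∀ u v, W u v = W v u)
    (hXle : ∀ v' v, Adj v' v → ∀ y, Adj v y → y ≠ v' →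
      X v' v ≤ W v y - X v y)
    (hXatt : ∀ v' v, Adj v' v → ∃ y, Adj v y ∧ y ≠ v' ∧
      X v' v = W v y - X v y ∧
      ∀ z, Adj v z → z ≠ v' → z ≠ y → X v' v < W v z - X v z)
    (hstarAdj : ∀ v, Adj v (star v))
    (hstarMin : ∀ v y, Adj v y → y ≠ star v →
      W v (star v) - X v (star v) < W v y - X v y) :
    ∀ u v, Adj u v → ((star u = v ∧ star v = u) ↔ W u v < X u v + X v u) := by
  have key : ∀ u v, Adj u v → (star u = v ↔ W u v - X u v < X v u) := by
    intro u v huv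
    constructor
    · intro h
      obtain ⟨y, hy, hyv, hXeq, _⟩ := hXatt v u (hAdjSymm u v huv)
      rw [hXeq]
      have := hstarMin u y hy (by rw [h]; exact hyv)
      rw [h] at this; exact this
    · intro h
      by_contra hne
      have h1 := hstarMin u v huv (fun hv => hne hv.symm)
      have h2 := hXle v u (hAdjSymm u v huv) (star u) (hstarAdj u)
        (fun hv => hne hv)
      linarith
  intro u v huv
  have h1 := key u v huv
  have h2 := key v u (hAdjSymm u v huv)
  rw [hWSymm v u] at h2
  constructor
  · rintro ⟨hu, _⟩; linarith [h1.mp hu]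
  · intro h; exact ⟨h1.mpr (by linarith), h2.mpr (by linarith)⟩
end
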